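/- Every metrizable space without isolated points in which every σ-discrete subset is a Gδ-set is of the first category in itself. -/

import Mathlib

/-!
Fix a compatible metric. For each `n`, a maximal `1/(n+1)`-separated set `Dₙ` is a closed
discrete set, hence nowhere dense because no point is isolated, and `D = ⋃ₙ Dₙ` is a dense
σ-discrete set. By the `Λ`-property `D` is a dense `Gδ`, so its complement is meagre as well,
and `X = D ∪ Dᶜ` is meagre.
-/

open Set Topology

/-- A subset `A` of a topological space `X` is σ-discrete (in `X`) if it is a countable
union of sets `A n` such that every point of `X` has a neighborhood containing at most
one point of `A n`. -/
def SigmaDiscrete {X : Type*} [TopologicalSpace X] (A : Set X) : Prop :=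
  ∃ f : ℕ → Set X, A = ⋃ n, f n ∧
    ∀ n, ∀ x : X, ∃ U ∈ 𝓝 x, (U ∩ f n).Subsingleton

open Filter Metric NNReal ENNReal

section Topological

variable {X : Type*} [TopologicalSpace X]

theorem disjoint_nhdsNE_principal_of_subsingleton_inter [T1Space X] {s : Set X} {x : X}
    (h : ∃ U ∈ 𝓝 x, (U ∩ s).Subsingleton) : Disjoint (𝓝[≠] x) (𝓟 s) := by
  obtain ⟨U, hU, hsub⟩ := h
  have hfar : ((U ∩ s) \ {x})ᶜ ∈ 𝓝 x :=
    (hsub.anti sdiff_subset).finite.isClosed.isOpen_compl.mem_nhds (by simp)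
  rw [disjoint_principal_right]
  filter_upwards [nhdsWithin_le_nhds (inter_mem hU hfar), self_mem_nhdsWithin]
    with z ⟨hzU, hzfar⟩ hzx hzs
  exact hzfar ⟨⟨hzU, hzs⟩, hzx⟩

theorem isNowhereDense_of_disjoint_nhdsNE [∀ x : X, NeBot (𝓝[≠] x)] {s : Set X}
    (h : ∀ x, Disjoint (𝓝[≠] x) (𝓟 s)) : IsNowhereDense s := by
  rw [(isClosed_and_discrete_iff.2 h).1.isNowhereDense_iff, eq_empty_iff_forall_notMem]
  intro x hx
  have hs : s ∈ 𝓝[≠] x := mem_nhdsWithin_of_mem_nhds (mem_interior_iff_mem_nhds.1 hx)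
  exact NeBot.ne' (disjoint_self.1 ((h x).mono_right (le_principal_iff.2 hs)))

theorem SigmaDiscrete.isMeagre [T1Space X] [∀ x : X, NeBot (𝓝[≠] x)] {A : Set X}
    (hA : SigmaDiscrete A) : IsMeagre A := by
  obtain ⟨f, rfl, hf⟩ := hA
  refine isMeagre_iUnion fun n ↦ IsNowhereDense.isMeagre ?_
  exact isNowhereDense_of_disjoint_nhdsNE fun x ↦
    disjoint_nhdsNE_principal_of_subsingleton_inter (hf n x)

theorem IsGδ.isMeagre_compl {s : Set X} (hs : IsGδ s) (hd : Dense s) : IsMeagre sᶜ := by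
  rw [IsMeagre, compl_compl]
  exact residual_of_dense_Gδ hs hd

theorem IsMeagre.exists_isNowhereDense_subset_iUnion {s : Set X} (hs : IsMeagre s) :
    ∃ f : ℕ → Set X, (∀ n, IsNowhereDense (f n)) ∧ s ⊆ ⋃ n, f n := by
  obtain ⟨S, hS, hSc, hsS⟩ := isMeagre_iff_countable_union_isNowhereDense.1 hs
  -- `∅` is added so that the family can be enumerated by `ℕ` even when `S` is empty
  obtain ⟨f, hf⟩ := (hSc.insert ∅).exists_eq_range (insert_nonempty _ _)
  refine ⟨f, fun n ↦ ?_, ?_⟩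
  · have hfn : f n ∈ insert ∅ S := hf ▸ mem_range_self n
    rcases hfn with hfn | hfn
    · exact hfn ▸ isNowhereDense_empty
    · exact hS _ hfn
  · rw [← sUnion_range, ← hf]
    exact hsS.trans (sUnion_mono (subset_insert _ _))

end Topological

namespace Metric

variable {X : Type*} [PseudoEMetricSpace X]

theorem exists_isSeparated_isCover_univ (ε : ℝ≥0) :
    ∃ N : Set X, IsSeparated ε N ∧ IsCover ε univ N := by
  obtain ⟨N, hN⟩ := zorn_subset {N : Set X | IsSeparated ε N} fun c hc hchain ↦
    ⟨⋃₀ c, (pairwise_sUnion hchain.directedOn).2 hc, fun _ ↦ subset_sUnion_of_mem⟩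
  exact ⟨N, hN.prop, IsCover.of_maximal_isSeparated (by simpa using hN)⟩

theorem IsSeparated.exists_nhds_subsingleton_inter {ε : ℝ≥0∞} {N : Set X} (hε : ε ≠ 0)
    (hN : IsSeparated ε N) (x : X) : ∃ U ∈ 𝓝 x, (U ∩ N).Subsingleton := by
  refine ⟨eball x (ε / 2), eball_mem_nhds x (ENNReal.half_pos hε), ?_⟩
  rintro a ⟨ha, haN⟩ b ⟨hb, hbN⟩
  by_contra hab
  refine (hN haN hbN hab).not_ge ?_
  calc edist a b ≤ edist a x + edist b x := edist_triangle_right a b x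
    _ ≤ ε / 2 + ε / 2 := add_le_add (mem_eball.1 ha).le (mem_eball.1 hb).le
    _ = ε := ENNReal.add_halves ε

end Metric

theorem exists_sigmaDiscrete_dense (X : Type*) [TopologicalSpace X]
    [TopologicalSpace.PseudoMetrizableSpace X] : ∃ A : Set X, SigmaDiscrete A ∧ Dense A := by
  let _ : PseudoMetricSpace X := TopologicalSpace.pseudoMetrizableSpacePseudoMetric X
  choose N hsep hcover using fun n : ℕ ↦
    exists_isSeparated_isCover_univ (X := X) (n + 1 : ℝ≥0)⁻¹
  refine ⟨⋃ n, N n, ⟨N, rfl, fun n ↦ (hsep n).exists_nhds_subsingleton_inter (by simp)⟩,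
    fun x ↦ EMetric.mem_closure_iff.2 fun δ hδ ↦ ?_⟩
  obtain ⟨n, hn⟩ := ENNReal.exists_inv_nat_lt hδ.ne'
  obtain ⟨y, hy, hxy⟩ := hcover n (mem_univ x)
  have hradius : (((n + 1 : ℝ≥0)⁻¹ : ℝ≥0) : ℝ≥0∞) ≤ (n : ℝ≥0∞)⁻¹ := by
    simp [ENNReal.coe_inv]
  have hxy : edist x y ≤ (n + 1 : ℝ≥0)⁻¹ := hxy
  exact ⟨y, mem_iUnion_of_mem n hy, (hxy.trans hradius).trans_lt hn⟩

/-- Every metrizable space without isolated points in which every σ-discrete subset is a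
`Gδ`-set (a `Λ`-set) is of the first category in itself. -/
theorem stmt_1 {X : Type*} [TopologicalSpace X] [TopologicalSpace.MetrizableSpace X]
    (hni : ∀ x : X, ¬ IsOpen ({x} : Set X))
    (hΛ : ∀ A : Set X, SigmaDiscrete A → IsGδ A) :
    ∃ f : ℕ → Set X, (∀ n, IsNowhereDense (f n)) ∧ (⋃ n, f n) = Set.univ := by
  have _ : ∀ x : X, NeBot (𝓝[≠] x) := fun x ↦
    ⟨fun h ↦ hni x ((isOpen_singleton_iff_punctured_nhds x).2 h)⟩
  obtain ⟨D, hDσ, hDdense⟩ := exists_sigmaDiscrete_dense X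
  have hmeagre : IsMeagre (univ : Set X) := by
    rw [← union_compl_self D]
    exact hDσ.isMeagre.union ((hΛ D hDσ).isMeagre_compl hDdense)
  obtain ⟨f, hf, hcover⟩ := hmeagre.exists_isNowhereDense_subset_iUnion
  exact ⟨f, hf, univ_subset_iff.1 hcover⟩
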